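/- Let α > 0 and β > 0 be real. Then for all u ∈ (0,1), the function G(u) = F(-α,-β;1;u) satisfies u G'(u)/G(u) < αβ/(α+β), where F is the Gauss hypergeometric function. -/

import Mathlib

open Filter Topology

/-- Pochhammer symbol `(a)_n` for real `a`. -/
noncomputable def pochR (a : ℝ) (n : ℕ) : ℝ := ∏ i ∈ Finset.range n, (a + i)

/-- Gauss hypergeometric function `F(a,b;c;x)` with real parameters. -/
noncomputable def hypFR (a b c x : ℝ) : ℝ :=
  ∑' n : ℕ, pochR a n * pochR b n / (pochR c n * (Nat.factorial n : ℝ)) * x ^ n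

lemma pochR_succ (a : ℝ) (n : ℕ) : pochR a (n+1) = pochR a n * (a + n) :=
  Finset.prod_range_succ _ n

lemma pochR_zero (a : ℝ) : pochR a 0 = 1 := rfl

lemma pochR_one_eq (n : ℕ) : pochR 1 n = n.factorial := by
  induction n with
  | zero => simp [pochR_zero]
  | succ m ih => rw [pochR_succ, ih, Nat.factorial_succ]; push_cast; ring

lemma pochR_pos {a : ℝ} (ha : 0 < a) (n : ℕ) : 0 < pochR a n := by
  apply Finset.prod_pos
  intro i _
  positivity

/-- coefficients of ₂F₁(A,B;1) -/
noncomputable def coefR (A B : ℝ) (n : ℕ) : ℝ :=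
  pochR A n * pochR B n / (pochR 1 n * (Nat.factorial n : ℝ))

lemma coefR_zero (A B : ℝ) : coefR A B 0 = 1 := by simp [coefR, pochR_zero]

lemma coefR_rec (A B : ℝ) (n : ℕ) :
    coefR A B (n+1) * ((n:ℝ)+1)^2 = coefR A B n * ((n:ℝ) + A) * ((n:ℝ) + B) := by
  have h1 : ((n.factorial : ℝ)) ≠ 0 := Nat.cast_ne_zero.2 n.factorial_ne_zero
  simp only [coefR, pochR_succ, pochR_one_eq, Nat.factorial_succ]
  push_cast
  field_simp
  ring

lemma hypFR_eq (A B x : ℝ) : hypFR A B 1 x = ∑' n : ℕ, coefR A B n * x ^ n := rfl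

-- limit of (n+c)/(n+1) → 1
lemma tendsto_aff (c : ℝ) :
    Tendsto (fun n : ℕ => ((n:ℝ)+c)/((n:ℝ)+1)) atTop (𝓝 1) := by
  have h0 : Tendsto (fun n : ℕ => 1 / ((n:ℝ) + 1)) atTop (𝓝 0) :=
    tendsto_one_div_add_atTop_nhds_zero_nat
  have : Tendsto (fun n : ℕ => 1 + (c-1) * (1 / ((n:ℝ)+1))) atTop (𝓝 (1 + (c-1)*0)) :=
    (tendsto_const_nhds.add (h0.const_mul _))
  rw [mul_zero, add_zero] at this
  refine this.congr (fun n => ?_)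
  have : ((n:ℝ)+1) ≠ 0 := by positivity
  field_simp
  ring

lemma summable_master (q : ℕ → ℝ) (P Q : ℝ) (hP : 1 ≤ P) (hQ : 1 ≤ Q)
    (hq : ∀ n, |q (n+1)| * ((n:ℝ)+1)^2 ≤ |q n| * ((n:ℝ)+P) * ((n:ℝ)+Q))
    (r : ℝ) (hr0 : 0 < r) (hr1 : r < 1) :
    Summable (fun n : ℕ => ((n:ℝ)+1)^3 * |q n| * r^n) := by
  set m : ℕ → ℝ := fun n => pochR P n * pochR Q n / ((Nat.factorial n : ℝ))^2 with hm
  have hmpos : ∀ n, 0 < m n := by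
    intro n
    have := pochR_pos (lt_of_lt_of_le one_pos hP) n
    have := pochR_pos (lt_of_lt_of_le one_pos hQ) n
    have : (0:ℝ) < (Nat.factorial n : ℝ) := by positivity
    positivity
  have hmrec : ∀ n, m (n+1) * ((n:ℝ)+1)^2 = m n * ((n:ℝ)+P) * ((n:ℝ)+Q) := by
    intro n
    have h1 : ((Nat.factorial n : ℝ)) ≠ 0 := Nat.cast_ne_zero.2 n.factorial_ne_zero
    simp only [hm, pochR_succ, Nat.factorial_succ]
    push_cast
    field_simp
    ring
  -- |q n| ≤ |q 0| * m n
  have hbound : ∀ n, |q n| ≤ |q 0| * m n := by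
    intro n
    induction n with
    | zero => simp [hm, pochR_zero]
    | succ k ih =>
      have h2 : (0:ℝ) < ((k:ℝ)+1)^2 := by positivity
      have hPk : (0:ℝ) < (k:ℝ)+P := by positivity
      have hQk : (0:ℝ) < (k:ℝ)+Q := by positivity
      have := hq k
      have h3 : |q (k+1)| * ((k:ℝ)+1)^2 ≤ (|q 0| * m k) * ((k:ℝ)+P) * ((k:ℝ)+Q) := by
        calc |q (k+1)| * ((k:ℝ)+1)^2 ≤ |q k| * ((k:ℝ)+P) * ((k:ℝ)+Q) := hq k
        _ ≤ (|q 0| * m k) * ((k:ℝ)+P) * ((k:ℝ)+Q) := by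
            apply mul_le_mul_of_nonneg_right _ hQk.le
            exact mul_le_mul_of_nonneg_right ih hPk.le
      have h4 : (|q 0| * m k) * ((k:ℝ)+P) * ((k:ℝ)+Q) = |q 0| * m (k+1) * ((k:ℝ)+1)^2 := by
        rw [show |q 0| * m k * ((k:ℝ)+P) * ((k:ℝ)+Q) = |q 0| * (m k * ((k:ℝ)+P) * ((k:ℝ)+Q)) by ring,
          ← hmrec k]; ring
      rw [h4] at h3
      exact le_of_mul_le_mul_right h3 h2
  -- dominating series
  set f : ℕ → ℝ := fun n => ((n:ℝ)+1)^3 * m n * r^n with hf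
  have hfpos : ∀ n, 0 < f n := by
    intro n; have := hmpos n; positivity
  have hsumf : Summable f := by
    apply summable_of_ratio_test_tendsto_lt_one hr1 (Eventually.of_forall (fun n => (hfpos n).ne'))
    have heq : ∀ n : ℕ, ‖f (n+1)‖ / ‖f n‖ =
        r * (((n:ℝ)+2)/((n:ℝ)+1))^3 * (((n:ℝ)+P)/((n:ℝ)+1)) * (((n:ℝ)+Q)/((n:ℝ)+1)) := by
      intro n
      rw [Real.norm_eq_abs, Real.norm_eq_abs, abs_of_pos (hfpos _), abs_of_pos (hfpos _)]
      have h1 : ((n:ℝ)+1) ≠ 0 := by positivity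
      have h2 : m n ≠ 0 := (hmpos n).ne'
      have h3 : r ^ n ≠ 0 := by positivity
      have hm1 : m (n+1) = m n * ((n:ℝ)+P) * ((n:ℝ)+Q) / ((n:ℝ)+1)^2 := by
        field_simp [← hmrec n]
        exact hmrec n
      simp only [hf, hm1]
      push_cast
      field_simp
      ring
    have hlim : Tendsto (fun n : ℕ => r * (((n:ℝ)+2)/((n:ℝ)+1))^3 * (((n:ℝ)+P)/((n:ℝ)+1)) *
        (((n:ℝ)+Q)/((n:ℝ)+1))) atTop (𝓝 (r * 1^3 * 1 * 1)) := by
      exact (((tendsto_const_nhds.mul ((tendsto_aff 2).pow 3)).mul (tendsto_aff P)).mul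
        (tendsto_aff Q))
    rw [show r * 1^3 * 1 * 1 = r by ring] at hlim
    exact hlim.congr (fun n => (heq n).symm)
  apply Summable.of_nonneg_of_le (fun n => by positivity) (fun n => ?_) (hsumf.mul_left (|q 0|))
  simp only [hf]
  calc ((n:ℝ)+1)^3 * |q n| * r^n ≤ ((n:ℝ)+1)^3 * (|q 0| * m n) * r^n := by
        apply mul_le_mul_of_nonneg_right _ (by positivity)
        exact mul_le_mul_of_nonneg_left (hbound n) (by positivity)
  _ = |q 0| * (((n:ℝ)+1)^3 * m n * r^n) := by ring

lemma hyp_shift {q : ℕ → ℝ} {P Q : ℝ}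
    (hq : ∀ n : ℕ, |q (n+1)| * ((n:ℝ)+1)^2 ≤ |q n| * ((n:ℝ)+P) * ((n:ℝ)+Q)) :
    ∀ n : ℕ, |q (n+1+1)| * ((n:ℝ)+1)^2 ≤ |q (n+1)| * ((n:ℝ)+(P+1)) * ((n:ℝ)+(Q+1)) := by
  intro n
  have h := hq (n+1)
  push_cast at h
  nlinarith [abs_nonneg (q (n+1+1)), abs_nonneg (q (n+1)), sq_nonneg ((n:ℝ)+1),
    Nat.cast_nonneg (α := ℝ) n]

lemma hyp_d1 {q : ℕ → ℝ} {P Q : ℝ} (hP : 1 ≤ P) (hQ : 1 ≤ Q)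
    (hq : ∀ n : ℕ, |q (n+1)| * ((n:ℝ)+1)^2 ≤ |q n| * ((n:ℝ)+P) * ((n:ℝ)+Q)) :
    ∀ n : ℕ, |((n:ℝ)+1+1) * q (n+1+1)| * ((n:ℝ)+1)^2 ≤
      |((n:ℝ)+1) * q (n+1)| * ((n:ℝ)+(P+1)) * ((n:ℝ)+(Q+1)) := by
  intro n
  have h := hq (n+1)
  push_cast at h
  have e1 : |((n:ℝ)+1+1) * q (n+1+1)| = ((n:ℝ)+1+1) * |q (n+1+1)| := by
    rw [abs_mul, abs_of_pos (by positivity : (0:ℝ) < (n:ℝ)+1+1)]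
  have e2 : |((n:ℝ)+1) * q (n+1)| = ((n:ℝ)+1) * |q (n+1)| := by
    rw [abs_mul, abs_of_pos (by positivity : (0:ℝ) < (n:ℝ)+1)]
  rw [e1, e2]
  nlinarith [abs_nonneg (q (n+1+1)), abs_nonneg (q (n+1)), sq_nonneg ((n:ℝ)+1),
    Nat.cast_nonneg (α := ℝ) n]

lemma summable_dom {q : ℕ → ℝ} {r : ℝ}
    (h : Summable (fun n : ℕ => ((n:ℝ)+1)^3 * |q n| * r^n)) (t : ℕ → ℝ) (C : ℝ)
    (ht : ∀ n : ℕ, |t n| ≤ C * (((n:ℝ)+1)^3 * |q n| * r^n)) : Summable t := by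
  apply Summable.of_norm_bounded (h.mul_left C)
  intro n
  simpa using ht n

lemma one_le_cube (n : ℕ) : (1:ℝ) ≤ ((n:ℝ)+1)^3 := by
  have h : (0:ℝ) ≤ (n:ℝ) := Nat.cast_nonneg n
  nlinarith [sq_nonneg ((n:ℝ)+1), sq_nonneg (n:ℝ)]

lemma add_one_le_cube (n : ℕ) : ((n:ℝ)+1) ≤ ((n:ℝ)+1)^3 := by
  have h : (1:ℝ) ≤ (n:ℝ)+1 := by have := Nat.cast_nonneg (α := ℝ) n; linarith
  exact le_self_pow₀ h (by norm_num)

lemma hasDerivAt_psum (c : ℕ → ℝ)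
    (hs : ∀ r : ℝ, 0 < r → r < 1 → Summable (fun n : ℕ => ((n:ℝ)+1)^3 * |c n| * r^n))
    (hs1 : ∀ r : ℝ, 0 < r → r < 1 → Summable (fun n : ℕ => ((n:ℝ)+1)^3 * |c (n+1)| * r^n))
    {x : ℝ} (hx : |x| < 1) :
    HasDerivAt (fun y => ∑' n : ℕ, c n * y^n) (∑' n : ℕ, ((n:ℝ)+1) * c (n+1) * x^n) x := by
  set r : ℝ := (|x|+1)/2 with hr
  have hxr : |x| < r := by rw [hr]; linarith
  have hr0 : 0 < r := by have := abs_nonneg x; rw [hr]; linarith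
  have hr1 : r < 1 := by rw [hr]; linarith
  set t : Set ℝ := Metric.ball 0 r with hts
  have hmem : ∀ {y : ℝ}, y ∈ t → |y| < r := by
    intro y hy
    simpa [hts, Real.dist_eq] using hy
  have hxt : x ∈ t := by simp [hts, Real.dist_eq, hxr]
  set u : ℕ → ℝ := fun n => |c n| * n * r^(n-1) with hu
  have hsu : Summable u := by
    rw [← summable_nat_add_iff 1]
    apply summable_dom (hs1 r hr0 hr1) _ 1
    intro n
    have h1 : |u (n+1)| = ((n:ℝ)+1) * |c (n+1)| * r^n := by
      rw [hu]
      simp only [Nat.add_sub_cancel]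
      rw [abs_of_nonneg (by positivity)]
      push_cast; ring
    rw [h1, one_mul]
    gcongr
    exact add_one_le_cube n
  have hbnd : ∀ (n : ℕ) (y : ℝ), |y| < r → ‖c n * ((n:ℕ) * y^(n-1))‖ ≤ u n := by
    intro n y hy
    rw [hu]
    simp only [Real.norm_eq_abs, abs_mul, Nat.abs_cast, abs_pow]
    rw [show |c n| * ((n:ℝ) * |y|^(n-1)) = |c n| * (n:ℝ) * |y|^(n-1) by ring]
    gcongr
  have key := hasDerivAt_tsum_of_isPreconnected hsu Metric.isOpen_ball
    (convex_ball (0:ℝ) r).isPreconnected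
    (g := fun n y => c n * y^n) (g' := fun n y => c n * ((n:ℕ) * y^(n-1)))
    (fun n y _ => (hasDerivAt_pow n y).const_mul (c n))
    (fun n y hy => hbnd n y (hmem hy)) hxt ?_ hxt
  · have hsum2 : Summable (fun n : ℕ => c n * ((n:ℕ) * x^(n-1))) := by
      apply Summable.of_norm_bounded hsu
      intro n
      exact hbnd n x hxr
    have heq : ∑' n : ℕ, c n * ((n:ℕ) * x^(n-1)) = ∑' n : ℕ, ((n:ℝ)+1) * c (n+1) * x^n := by
      rw [Summable.tsum_eq_zero_add hsum2]
      simp only [Nat.cast_zero, zero_mul, mul_zero, zero_add, Nat.add_sub_cancel]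
      congr 1
      funext n
      push_cast
      ring
    rwa [heq] at key
  · -- summable at x
    apply summable_dom (hs r hr0 hr1) _ 1
    intro n
    rw [one_mul, abs_mul, abs_pow]
    calc |c n| * |x|^n ≤ ((n:ℝ)+1)^3 * |c n| * r^n := by
          rw [show |c n| * |x|^n = 1 * |c n| * |x|^n by ring]
          gcongr
          · exact one_le_cube n
    _ ≤ _ := le_refl _

lemma tsum_mul_shift {c d : ℕ → ℝ} {u : ℝ} (h0 : d 0 = 0) (hd : ∀ n : ℕ, d (n+1) = c n)
    (hsum : Summable (fun n : ℕ => c n * u^n)) :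
    Summable (fun n : ℕ => d n * u^n) ∧
      (∑' n : ℕ, c n * u^n) * u = ∑' n : ℕ, d n * u^n := by
  have hs : Summable (fun n : ℕ => d n * u^n) := by
    rw [← summable_nat_add_iff 1]
    have : (fun n : ℕ => d (n+1) * u^(n+1)) = fun n : ℕ => (c n * u^n) * u := by
      funext n; rw [hd n, pow_succ]; ring
    rw [this]
    exact hsum.mul_right u
  refine ⟨hs, ?_⟩
  rw [Summable.tsum_eq_zero_add hs]
  simp only [h0, pow_zero, zero_mul, mul_zero, zero_add]
  rw [← tsum_mul_right]
  congr 1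
  funext n
  rw [hd n, pow_succ]
  ring

lemma ode_psum (q : ℕ → ℝ) (A B : ℝ)
    (hrec : ∀ n : ℕ, q (n+1) * ((n:ℝ)+1)^2 = q n * ((n:ℝ)+A) * ((n:ℝ)+B))
    {u : ℝ}
    (S0 : Summable fun n : ℕ => q n * u^n)
    (S1 : Summable fun n : ℕ => (((n:ℝ)+1) * q (n+1)) * u^n)
    (S2 : Summable fun n : ℕ => (((n:ℝ)+1) * ((n:ℝ)+2) * q (n+2)) * u^n) :
    u * (1-u) * (∑' n : ℕ, (((n:ℝ)+1) * ((n:ℝ)+2) * q (n+2)) * u^n)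
      + (1 - (1+A+B)*u) * (∑' n : ℕ, (((n:ℝ)+1) * q (n+1)) * u^n)
      - A*B*(∑' n : ℕ, q n * u^n) = 0 := by
  obtain ⟨hR, eR⟩ := tsum_mul_shift (c := fun n : ℕ => ((n:ℝ)+1) * ((n:ℝ)+2) * q (n+2))
    (d := fun n : ℕ => (n:ℝ)*((n:ℝ)+1) * q (n+1)) (by norm_num)
    (fun n => by push_cast; ring) S2
  obtain ⟨hN, eN⟩ := tsum_mul_shift (c := fun n : ℕ => ((n:ℝ)+1) * q (n+1))
    (d := fun n : ℕ => (n:ℝ) * q n) (by norm_num) (fun n => by push_cast; ring) S1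
  obtain ⟨hM, eM⟩ := tsum_mul_shift (c := fun n : ℕ => (n:ℝ)*((n:ℝ)+1) * q (n+1))
    (d := fun n : ℕ => ((n:ℝ)-1)*(n:ℝ) * q n) (by norm_num) (fun n => by push_cast; ring) hR
  have comb : ∑' n : ℕ, (((n:ℝ)*((n:ℝ)+1) * q (n+1)) * u^n + (((n:ℝ)+1) * q (n+1)) * u^n
      - (((n:ℝ)-1)*(n:ℝ) * q n) * u^n - (1+A+B) * (((n:ℝ) * q n) * u^n)
      - A*B*(q n * u^n))
      = (∑' n : ℕ, ((n:ℝ)*((n:ℝ)+1) * q (n+1)) * u^n)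
        + (∑' n : ℕ, (((n:ℝ)+1) * q (n+1)) * u^n)
        - (∑' n : ℕ, (((n:ℝ)-1)*(n:ℝ) * q n) * u^n)
        - (1+A+B) * (∑' n : ℕ, ((n:ℝ) * q n) * u^n)
        - A*B*(∑' n : ℕ, q n * u^n) := by
    rw [Summable.tsum_sub (((hR.add S1).sub hM).sub (hN.mul_left _)) (S0.mul_left _),
      Summable.tsum_sub ((hR.add S1).sub hM) (hN.mul_left _),
      Summable.tsum_sub (hR.add S1) hM, Summable.tsum_add hR S1, tsum_mul_left, tsum_mul_left]
  have hzero : ∀ n : ℕ, (((n:ℝ)*((n:ℝ)+1) * q (n+1)) * u^n + (((n:ℝ)+1) * q (n+1)) * u^n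
      - (((n:ℝ)-1)*(n:ℝ) * q n) * u^n - (1+A+B) * (((n:ℝ) * q n) * u^n)
      - A*B*(q n * u^n)) = 0 := by
    intro n
    have h := hrec n
    linear_combination u^n * h
  calc u * (1-u) * (∑' n : ℕ, (((n:ℝ)+1) * ((n:ℝ)+2) * q (n+2)) * u^n)
      + (1 - (1+A+B)*u) * (∑' n : ℕ, (((n:ℝ)+1) * q (n+1)) * u^n)
      - A*B*(∑' n : ℕ, q n * u^n)
      = (∑' n : ℕ, ((n:ℝ)*((n:ℝ)+1) * q (n+1)) * u^n)
        + (∑' n : ℕ, (((n:ℝ)+1) * q (n+1)) * u^n)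
        - (∑' n : ℕ, (((n:ℝ)-1)*(n:ℝ) * q n) * u^n)
        - (1+A+B) * (∑' n : ℕ, ((n:ℝ) * q n) * u^n)
        - A*B*(∑' n : ℕ, q n * u^n) := by
        rw [← eR, ← eN, ← eM, ← eR]
        ring
  _ = 0 := by
      rw [← comb]
      simp only [hzero]
      exact tsum_zero

noncomputable def c1 (A B : ℝ) (n : ℕ) : ℝ := ((n:ℝ)+1) * coefR A B (n+1)
noncomputable def c2 (A B : ℝ) (n : ℕ) : ℝ := ((n:ℝ)+1) * ((n:ℝ)+2) * coefR A B (n+2)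

lemma coefR_abs_rec (A B : ℝ) : ∀ n : ℕ,
    |coefR A B (n+1)| * ((n:ℝ)+1)^2 ≤ |coefR A B n| * ((n:ℝ)+(|A|+1)) * ((n:ℝ)+(|B|+1)) := by
  intro n
  have h : |coefR A B (n+1)| * ((n:ℝ)+1)^2 = |coefR A B n| * |(n:ℝ)+A| * |(n:ℝ)+B| := by
    rw [← abs_mul, ← abs_mul, ← coefR_rec, abs_mul]
    rw [abs_of_nonneg (by positivity : (0:ℝ) ≤ ((n:ℝ)+1)^2)]
  rw [h]
  have hA : |(n:ℝ)+A| ≤ (n:ℝ)+(|A|+1) := by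
    calc |(n:ℝ)+A| ≤ |(n:ℝ)| + |A| := abs_add_le _ _
    _ ≤ (n:ℝ)+(|A|+1) := by rw [abs_of_nonneg (Nat.cast_nonneg n)]; linarith
  have hB : |(n:ℝ)+B| ≤ (n:ℝ)+(|B|+1) := by
    calc |(n:ℝ)+B| ≤ |(n:ℝ)| + |B| := abs_add_le _ _
    _ ≤ (n:ℝ)+(|B|+1) := by rw [abs_of_nonneg (Nat.cast_nonneg n)]; linarith
  apply mul_le_mul (mul_le_mul le_rfl hA (abs_nonneg _) (abs_nonneg _)) hB (abs_nonneg _)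
    (by positivity)

lemma c1_hyp (A B : ℝ) : ∀ n : ℕ,
    |c1 A B (n+1)| * ((n:ℝ)+1)^2 ≤ |c1 A B n| * ((n:ℝ)+(|A|+1+1)) * ((n:ℝ)+(|B|+1+1)) := by
  intro n
  have h := hyp_d1 (by linarith [abs_nonneg A]) (by linarith [abs_nonneg B])
    (coefR_abs_rec A B) n
  simp only [c1]
  push_cast
  convert h using 3 <;> push_cast <;> ring

lemma master0 (A B : ℝ) {r : ℝ} (hr0 : 0 < r) (hr1 : r < 1) :
    Summable (fun n : ℕ => ((n:ℝ)+1)^3 * |coefR A B n| * r^n) :=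
  summable_master _ (|A|+1) (|B|+1) (by linarith [abs_nonneg A]) (by linarith [abs_nonneg B])
    (coefR_abs_rec A B) r hr0 hr1

lemma master1 (A B : ℝ) {r : ℝ} (hr0 : 0 < r) (hr1 : r < 1) :
    Summable (fun n : ℕ => ((n:ℝ)+1)^3 * |coefR A B (n+1)| * r^n) :=
  summable_master _ (|A|+1+1) (|B|+1+1) (by linarith [abs_nonneg A]) (by linarith [abs_nonneg B])
    (hyp_shift (coefR_abs_rec A B)) r hr0 hr1

lemma master2 (A B : ℝ) {r : ℝ} (hr0 : 0 < r) (hr1 : r < 1) :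
    Summable (fun n : ℕ => ((n:ℝ)+1)^3 * |coefR A B (n+1+1)| * r^n) :=
  summable_master _ (|A|+1+1+1) (|B|+1+1+1) (by linarith [abs_nonneg A]) (by linarith [abs_nonneg B])
    (hyp_shift (q := fun n => coefR A B (n+1)) (P := |A|+1+1) (Q := |B|+1+1)
      (hyp_shift (coefR_abs_rec A B))) r hr0 hr1

lemma masterc1 (A B : ℝ) {r : ℝ} (hr0 : 0 < r) (hr1 : r < 1) :
    Summable (fun n : ℕ => ((n:ℝ)+1)^3 * |c1 A B n| * r^n) :=
  summable_master _ (|A|+1+1) (|B|+1+1) (by linarith [abs_nonneg A]) (by linarith [abs_nonneg B])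
    (c1_hyp A B) r hr0 hr1

lemma masterc1s (A B : ℝ) {r : ℝ} (hr0 : 0 < r) (hr1 : r < 1) :
    Summable (fun n : ℕ => ((n:ℝ)+1)^3 * |c1 A B (n+1)| * r^n) :=
  summable_master _ (|A|+1+1+1) (|B|+1+1+1) (by linarith [abs_nonneg A]) (by linarith [abs_nonneg B])
    (hyp_shift (c1_hyp A B)) r hr0 hr1

lemma hasDerivAt_hypF (A B : ℝ) {x : ℝ} (hx : |x| < 1) :
    HasDerivAt (fun y => hypFR A B 1 y) (∑' n : ℕ, c1 A B n * x^n) x := by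
  have h := hasDerivAt_psum (coefR A B) (fun r h1 h2 => master0 A B h1 h2)
    (fun r h1 h2 => master1 A B h1 h2) hx
  exact h

lemma hasDerivAt_hypF' (A B : ℝ) {x : ℝ} (hx : |x| < 1) :
    HasDerivAt (fun y => ∑' n : ℕ, c1 A B n * y^n) (∑' n : ℕ, c2 A B n * x^n) x := by
  have h := hasDerivAt_psum (c1 A B) (fun r h1 h2 => masterc1 A B h1 h2)
    (fun r h1 h2 => masterc1s A B h1 h2) hx
  have e : ∑' n : ℕ, ((n:ℝ)+1) * c1 A B (n+1) * x^n = ∑' n : ℕ, c2 A B n * x^n := by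
    congr 1
    funext n
    simp only [c1, c2]
    push_cast
    ring
  rwa [e] at h

lemma sum_S0 (A B : ℝ) {u : ℝ} (hu0 : 0 < u) (hu1 : u < 1) :
    Summable (fun n : ℕ => coefR A B n * u^n) := by
  apply summable_dom (master0 A B hu0 hu1) _ 1
  intro n
  rw [one_mul, abs_mul, abs_pow, abs_of_pos hu0]
  calc |coefR A B n| * u^n = 1 * (|coefR A B n| * u^n) := by ring
  _ ≤ ((n:ℝ)+1)^3 * (|coefR A B n| * u^n) := by
      apply mul_le_mul_of_nonneg_right (one_le_cube n) (by positivity)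
  _ = ((n:ℝ)+1)^3 * |coefR A B n| * u^n := by ring

lemma sum_S1 (A B : ℝ) {u : ℝ} (hu0 : 0 < u) (hu1 : u < 1) :
    Summable (fun n : ℕ => c1 A B n * u^n) := by
  apply summable_dom (master1 A B hu0 hu1) _ 1
  intro n
  rw [one_mul, abs_mul, abs_pow, abs_of_pos hu0]
  simp only [c1]
  rw [abs_mul, abs_of_nonneg (by positivity : (0:ℝ) ≤ (n:ℝ)+1)]
  calc ((n:ℝ)+1) * |coefR A B (n+1)| * u^n
      ≤ ((n:ℝ)+1)^3 * |coefR A B (n+1)| * u^n := by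
        apply mul_le_mul_of_nonneg_right
          (mul_le_mul_of_nonneg_right (add_one_le_cube n) (abs_nonneg _)) (by positivity)
  _ = ((n:ℝ)+1)^3 * |coefR A B (n+1)| * u^n := by ring

lemma sum_S2 (A B : ℝ) {u : ℝ} (hu0 : 0 < u) (hu1 : u < 1) :
    Summable (fun n : ℕ => c2 A B n * u^n) := by
  apply summable_dom (master2 A B hu0 hu1) _ 2
  intro n
  rw [abs_mul, abs_pow, abs_of_pos hu0]
  simp only [c2]
  rw [abs_mul, abs_mul, abs_of_nonneg (by positivity : (0:ℝ) ≤ (n:ℝ)+1),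
    abs_of_nonneg (by positivity : (0:ℝ) ≤ (n:ℝ)+2)]
  have h : ((n:ℝ)+1)*((n:ℝ)+2) ≤ 2*((n:ℝ)+1)^3 := by
    have h0 : (0:ℝ) ≤ (n:ℝ) := Nat.cast_nonneg n
    nlinarith [sq_nonneg ((n:ℝ)+1), sq_nonneg (n:ℝ)]
  calc ((n:ℝ)+1)*((n:ℝ)+2) * |coefR A B (n+2)| * u^n
      ≤ (2*((n:ℝ)+1)^3) * |coefR A B (n+2)| * u^n := by
        apply mul_le_mul_of_nonneg_right
          (mul_le_mul_of_nonneg_right h (abs_nonneg _)) (by positivity)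
  _ = 2 * (((n:ℝ)+1)^3 * |coefR A B (n+1+1)| * u^n) := by ring

lemma ode_hypF (A B : ℝ) {u : ℝ} (hu0 : 0 < u) (hu1 : u < 1) :
    u * (1-u) * (∑' n : ℕ, c2 A B n * u^n)
      + (1 - (1+A+B)*u) * (∑' n : ℕ, c1 A B n * u^n)
      - A*B*(∑' n : ℕ, coefR A B n * u^n) = 0 := by
  exact ode_psum (coefR A B) A B (coefR_rec A B) (sum_S0 A B hu0 hu1)
    (sum_S1 A B hu0 hu1) (sum_S2 A B hu0 hu1)

noncomputable def Gf (α β : ℝ) (y : ℝ) : ℝ := ∑' n : ℕ, coefR (1+α) (1+β) n * y^n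
noncomputable def Gf1 (α β : ℝ) (y : ℝ) : ℝ := ∑' n : ℕ, c1 (1+α) (1+β) n * y^n
noncomputable def Gf2 (α β : ℝ) (y : ℝ) : ℝ := ∑' n : ℕ, c2 (1+α) (1+β) n * y^n
noncomputable def Ff (α β : ℝ) (y : ℝ) : ℝ := ∑' n : ℕ, coefR (-α) (-β) n * y^n
noncomputable def Ff1 (α β : ℝ) (y : ℝ) : ℝ := ∑' n : ℕ, c1 (-α) (-β) n * y^n
noncomputable def Ff2 (α β : ℝ) (y : ℝ) : ℝ := ∑' n : ℕ, c2 (-α) (-β) n * y^n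
noncomputable def Hf (α β : ℝ) (y : ℝ) : ℝ := (1-y) ^ (1+α+β : ℝ) * Gf α β y
noncomputable def Hf1 (α β : ℝ) (y : ℝ) : ℝ :=
  (1-y) ^ (1+α+β : ℝ) * Gf1 α β y - (1+α+β) * (1-y) ^ (α+β : ℝ) * Gf α β y
noncomputable def Hf2 (α β : ℝ) (y : ℝ) : ℝ :=
  (1-y) ^ (1+α+β : ℝ) * Gf2 α β y - 2*(1+α+β) * (1-y) ^ (α+β : ℝ) * Gf1 α β y
    + (1+α+β)*(α+β) * (1-y) ^ (α+β-1 : ℝ) * Gf α β y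

lemma hasDerivAt_G (α β : ℝ) {x : ℝ} (hx : |x| < 1) :
    HasDerivAt (Gf α β) (Gf1 α β x) x := hasDerivAt_hypF (1+α) (1+β) hx

lemma hasDerivAt_G1 (α β : ℝ) {x : ℝ} (hx : |x| < 1) :
    HasDerivAt (Gf1 α β) (Gf2 α β x) x := hasDerivAt_hypF' (1+α) (1+β) hx

lemma hasDerivAt_F (α β : ℝ) {x : ℝ} (hx : |x| < 1) :
    HasDerivAt (Ff α β) (Ff1 α β x) x := hasDerivAt_hypF (-α) (-β) hx

lemma hasDerivAt_F1 (α β : ℝ) {x : ℝ} (hx : |x| < 1) :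
    HasDerivAt (Ff1 α β) (Ff2 α β x) x := hasDerivAt_hypF' (-α) (-β) hx

lemma hasDerivAt_rpow1m (p : ℝ) {x : ℝ} (hx : x < 1) :
    HasDerivAt (fun y : ℝ => (1-y) ^ p) (-p * (1-x) ^ (p-1)) x := by
  have h1 : HasDerivAt (fun y : ℝ => 1 - y) (-1) x := by
    simpa using (hasDerivAt_id x).const_sub 1
  have h2 := (Real.hasDerivAt_rpow_const (x := 1-x) (p := p)
    (Or.inl (by linarith : (1:ℝ)-x ≠ 0))).comp x h1
  exact h2.congr_deriv (by ring)

lemma hasDerivAt_H (α β : ℝ) {x : ℝ} (hx : |x| < 1) :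
    HasDerivAt (Hf α β) (Hf1 α β x) x := by
  have hx1 : x < 1 := lt_of_le_of_lt (le_abs_self x) hx
  have h := (hasDerivAt_rpow1m (1+α+β) hx1).mul (hasDerivAt_G α β hx)
  have e : -(1+α+β) * (1-x)^(1+α+β-1 : ℝ) * Gf α β x + (1-x)^(1+α+β : ℝ) * Gf1 α β x
      = Hf1 α β x := by
    rw [show (1+α+β-1 : ℝ) = α+β by ring]
    simp only [Hf1]
    ring
  rwa [e] at h

lemma hasDerivAt_H1 (α β : ℝ) {x : ℝ} (hx : |x| < 1) :
    HasDerivAt (Hf1 α β) (Hf2 α β x) x := by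
  have hx1 : x < 1 := lt_of_le_of_lt (le_abs_self x) hx
  have h1 := (hasDerivAt_rpow1m (1+α+β) hx1).mul (hasDerivAt_G1 α β hx)
  have h2 := ((hasDerivAt_rpow1m (α+β) hx1).mul (hasDerivAt_G α β hx)).const_mul (1+α+β)
  have h := h1.sub h2
  have e : -(1+α+β) * (1-x)^(1+α+β-1 : ℝ) * Gf1 α β x + (1-x)^(1+α+β : ℝ) * Gf2 α β x
      - (1+α+β) * (-(α+β) * (1-x)^(α+β-1 : ℝ) * Gf α β x + (1-x)^(α+β : ℝ) * Gf1 α β x)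
      = Hf2 α β x := by
    rw [show (1+α+β-1 : ℝ) = α+β by ring]
    simp only [Hf2]
    ring
  rw [e] at h
  refine h.congr_of_eventuallyEq (Eventually.of_forall fun y => ?_)
  simp only [Hf1, Pi.mul_apply, Pi.sub_apply]
  ring

lemma ode_G (α β : ℝ) {u : ℝ} (hu0 : 0 < u) (hu1 : u < 1) :
    u * (1-u) * Gf2 α β u + (1 - (3+α+β)*u) * Gf1 α β u - (1+α)*(1+β) * Gf α β u = 0 := by
  have h := ode_hypF (1+α) (1+β) hu0 hu1
  have e : (1 + (1+α) + (1+β)) = (3+α+β : ℝ) := by ring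
  rw [e] at h
  exact h

lemma ode_F (α β : ℝ) {u : ℝ} (hu0 : 0 < u) (hu1 : u < 1) :
    u * (1-u) * Ff2 α β u + (1 - (1-α-β)*u) * Ff1 α β u - α*β * Ff α β u = 0 := by
  have h := ode_hypF (-α) (-β) hu0 hu1
  have e : (1 + -α + -β) = (1-α-β : ℝ) := by ring
  rw [e] at h
  have e2 : (-α) * (-β) = α*β := by ring
  rw [e2] at h
  exact h

lemma ode_H (α β : ℝ) {u : ℝ} (hu0 : 0 < u) (hu1 : u < 1) :
    u * (1-u) * Hf2 α β u + (1 - (1-α-β)*u) * Hf1 α β u - α*β * Hf α β u = 0 := by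
  have hg := ode_G α β hu0 hu1
  have hv : (0:ℝ) < 1-u := by linarith
  set w : ℝ := (1-u) ^ (α+β-1 : ℝ) with hw
  have e1 : (1-u) ^ (α+β : ℝ) = w * (1-u) := by
    rw [hw, ← Real.rpow_add_one hv.ne']
    congr 1
    ring
  have e2 : (1-u) ^ (1+α+β : ℝ) = w * (1-u)^2 := by
    rw [hw, ← Real.rpow_natCast (1-u) 2, ← Real.rpow_add hv]
    congr 1
    push_cast
    ring
  simp only [Hf, Hf1, Hf2, e1, e2]
  linear_combination (w * (1-u)^2) * hg

lemma psum_zero (c : ℕ → ℝ) : ∑' n : ℕ, c n * (0:ℝ)^n = c 0 := by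
  rw [tsum_eq_single 0 (fun n hn => by simp [zero_pow hn])]
  simp

lemma eq_of_deriv_zero_Ioo {f : ℝ → ℝ} (hf : ∀ x ∈ Set.Ioo (0:ℝ) 1, HasDerivAt f 0 x) :
    ∀ x ∈ Set.Ioo (0:ℝ) 1, ∀ y ∈ Set.Ioo (0:ℝ) 1, f x = f y := by
  have key : ∀ a ∈ Set.Ioo (0:ℝ) 1, ∀ b ∈ Set.Ioo (0:ℝ) 1, a < b → f a = f b := by
    intro a ha b hb hab
    have hsub : Set.Icc a b ⊆ Set.Ioo (0:ℝ) 1 := fun z hz =>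
      ⟨lt_of_lt_of_le ha.1 hz.1, lt_of_le_of_lt hz.2 hb.2⟩
    have hcont : ContinuousOn f (Set.Icc a b) := fun z hz =>
      ((hf z (hsub hz)).continuousAt).continuousWithinAt
    obtain ⟨c, _, hc2⟩ := exists_hasDerivAt_eq_slope f (fun _ => (0:ℝ)) hab hcont
      (fun z hz => hf z (hsub (Set.mem_Icc_of_Ioo hz)))
    have hba : b - a ≠ 0 := by linarith
    have h2 : (0:ℝ) = (f b - f a) / (b - a) := hc2
    rw [eq_div_iff hba, zero_mul] at h2
    linarith
  intro x hx y hy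
  rcases lt_trichotomy x y with h | h | h
  · exact key x hx y hy h
  · rw [h]
  · exact (key y hy x hx h).symm

lemma deriv_zero_limit {f : ℝ → ℝ} (hf : ∀ x ∈ Set.Ioo (0:ℝ) 1, HasDerivAt f 0 x)
    (h0 : ContinuousAt f 0) : ∀ y ∈ Set.Ioo (0:ℝ) 1, f y = f 0 := by
  intro y hy
  have hne : (𝓝[Set.Ioo (0:ℝ) 1] 0).NeBot := by
    apply mem_closure_iff_nhdsWithin_neBot.mp
    rw [closure_Ioo (by norm_num : (0:ℝ) ≠ 1)]
    exact ⟨le_refl 0, by norm_num⟩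
  have h1 : Tendsto f (𝓝[Set.Ioo (0:ℝ) 1] 0) (𝓝 (f 0)) :=
    h0.continuousWithinAt
  have h2 : Tendsto f (𝓝[Set.Ioo (0:ℝ) 1] 0) (𝓝 (f y)) := by
    apply Tendsto.congr' _ tendsto_const_nhds
    filter_upwards [eventually_mem_nhdsWithin] with x hx
    exact (eq_of_deriv_zero_Ioo hf y hy x hx)
  exact tendsto_nhds_unique h2 h1

lemma coefG_pos (α β : ℝ) (hα : 0 < α) (hβ : 0 < β) (n : ℕ) : 0 < coefR (1+α) (1+β) n := by
  have h1 := pochR_pos (by linarith : (0:ℝ) < 1+α) n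
  have h2 := pochR_pos (by linarith : (0:ℝ) < 1+β) n
  have h3 := pochR_pos one_pos n
  have h4 : (0:ℝ) < (Nat.factorial n : ℝ) := by positivity
  exact div_pos (mul_pos h1 h2) (mul_pos h3 h4)

lemma G_ge_one (α β : ℝ) (hα : 0 < α) (hβ : 0 < β) {u : ℝ} (hu0 : 0 < u) (hu1 : u < 1) :
    1 ≤ Gf α β u := by
  have hsum := sum_S0 (1+α) (1+β) hu0 hu1
  have h0 : coefR (1+α) (1+β) 0 * u^0 = 1 := by rw [coefR_zero]; simp
  calc (1:ℝ) = coefR (1+α) (1+β) 0 * u^0 := h0.symm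
  _ ≤ ∑' n : ℕ, coefR (1+α) (1+β) n * u^n := by
      apply Summable.le_tsum hsum 0
      intro i _
      exact mul_nonneg (coefG_pos α β hα hβ i).le (by positivity)

lemma H_pos (α β : ℝ) (hα : 0 < α) (hβ : 0 < β) {u : ℝ} (hu0 : 0 < u) (hu1 : u < 1) :
    0 < Hf α β u := by
  have h1 : (0:ℝ) < (1-u) ^ (1+α+β : ℝ) := Real.rpow_pos_of_pos (by linarith) _
  have h2 := G_ge_one α β hα hβ hu0 hu1
  simp only [Hf]
  nlinarith

lemma Wr_zero (α β : ℝ) {u : ℝ} (hu : u ∈ Set.Ioo (0:ℝ) 1) :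
    Ff α β u * Hf1 α β u - Ff1 α β u * Hf α β u = 0 := by
  set Wr : ℝ → ℝ := fun x => Ff α β x * Hf1 α β x - Ff1 α β x * Hf α β x with hWrdef
  set φ : ℝ → ℝ := fun x => x * (1-x) ^ (-(α+β) : ℝ) * Wr x with hφdef
  have hφd : ∀ x ∈ Set.Ioo (0:ℝ) 1, HasDerivAt φ 0 x := by
    intro x hx
    have hx0 : 0 < x := hx.1
    have hx1 : x < 1 := hx.2
    have hxa : |x| < 1 := abs_lt.mpr ⟨by linarith, hx1⟩
    have hv : (0:ℝ) < 1-x := by linarith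
    have hWr : HasDerivAt Wr (Ff α β x * Hf2 α β x - Ff2 α β x * Hf α β x) x := by
      have h := ((hasDerivAt_F α β hxa).mul (hasDerivAt_H1 α β hxa)).sub
        ((hasDerivAt_F1 α β hxa).mul (hasDerivAt_H α β hxa))
      exact h.congr_deriv (by ring)
    have hA : HasDerivAt (fun y : ℝ => y * (1-y) ^ (-(α+β) : ℝ))
        (1 * (1-x) ^ (-(α+β) : ℝ) + x * (-(-(α+β)) * (1-x) ^ (-(α+β)-1 : ℝ))) x :=
      (hasDerivAt_id x).mul (hasDerivAt_rpow1m (-(α+β)) hx1)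
    have h := hA.mul hWr
    have hodeF := ode_F α β hx0 hx1
    have hodeH := ode_H α β hx0 hx1
    set w2 : ℝ := (1-x) ^ (-(α+β)-1 : ℝ) with hw2
    have e1 : (1-x) ^ (-(α+β) : ℝ) = w2 * (1-x) := by
      rw [hw2, ← Real.rpow_add_one hv.ne']
      congr 1
      ring
    have e0 : (1 * (1-x) ^ (-(α+β) : ℝ) + x * (-(-(α+β)) * (1-x) ^ (-(α+β)-1 : ℝ))) * Wr x
        + (x * (1-x) ^ (-(α+β) : ℝ)) * (Ff α β x * Hf2 α β x - Ff2 α β x * Hf α β x) = 0 := by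
      rw [e1, hWrdef]
      simp only
      linear_combination w2 * Ff α β x * hodeH - w2 * Hf α β x * hodeF
    rwa [e0] at h
  have hc0 : ContinuousAt φ 0 := by
    have hWc : ContinuousAt Wr 0 := by
      have h1 := (hasDerivAt_F α β (by norm_num : |(0:ℝ)| < 1)).continuousAt
      have h2 := (hasDerivAt_F1 α β (by norm_num : |(0:ℝ)| < 1)).continuousAt
      have h3 := (hasDerivAt_H α β (by norm_num : |(0:ℝ)| < 1)).continuousAt
      have h4 := (hasDerivAt_H1 α β (by norm_num : |(0:ℝ)| < 1)).continuousAt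
      exact (h1.mul h4).sub (h2.mul h3)
    have hrc : ContinuousAt (fun y : ℝ => (1-y) ^ (-(α+β) : ℝ)) 0 := by
      apply ContinuousAt.rpow_const
      · exact (continuous_const.sub continuous_id).continuousAt
      · left; norm_num
    exact (continuousAt_id.mul hrc).mul hWc
  have hval := deriv_zero_limit hφd hc0 u hu
  have hφ0 : φ 0 = 0 := by simp [hφdef]
  rw [hφ0] at hval
  have hu0 : (0:ℝ) < u := hu.1
  have hrp : (0:ℝ) < (1-u) ^ (-(α+β) : ℝ) := Real.rpow_pos_of_pos (by linarith [hu.2]) _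
  have : u * (1-u) ^ (-(α+β) : ℝ) * Wr u = 0 := hval
  have hne : u * (1-u) ^ (-(α+β) : ℝ) ≠ 0 := by positivity
  have := mul_eq_zero.mp this
  rcases this with h | h
  · exact absurd h hne
  · exact h

lemma F_eq_H (α β : ℝ) (hα : 0 < α) (hβ : 0 < β) :
    ∀ u ∈ Set.Ioo (0:ℝ) 1, Ff α β u = Hf α β u := by
  set ψ : ℝ → ℝ := fun x => Ff α β x / Hf α β x with hψdef
  have hψd : ∀ x ∈ Set.Ioo (0:ℝ) 1, HasDerivAt ψ 0 x := by
    intro x hx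
    have hxa : |x| < 1 := abs_lt.mpr ⟨by linarith [hx.1], hx.2⟩
    have hHne : Hf α β x ≠ 0 := (H_pos α β hα hβ hx.1 hx.2).ne'
    have h := (hasDerivAt_F α β hxa).div (hasDerivAt_H α β hxa) hHne
    have hwr := Wr_zero α β hx
    have e : (Ff1 α β x * Hf α β x - Ff α β x * Hf1 α β x) / Hf α β x ^ 2 = 0 := by
      have : Ff1 α β x * Hf α β x - Ff α β x * Hf1 α β x = 0 := by linarith
      rw [this, zero_div]
    rwa [e] at h
  have hG0 : Gf α β 0 = 1 := by
    have := psum_zero (coefR (1+α) (1+β))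
    simpa [Gf, coefR_zero] using this
  have hF0 : Ff α β 0 = 1 := by
    have := psum_zero (coefR (-α) (-β))
    simpa [Ff, coefR_zero] using this
  have hH0 : Hf α β 0 = 1 := by
    simp only [Hf, hG0]
    norm_num
  have hc0 : ContinuousAt ψ 0 := by
    have h1 := (hasDerivAt_F α β (by norm_num : |(0:ℝ)| < 1)).continuousAt
    have h3 := (hasDerivAt_H α β (by norm_num : |(0:ℝ)| < 1)).continuousAt
    exact h1.div h3 (by rw [hH0]; norm_num)
  intro u hu
  have hval := deriv_zero_limit hψd hc0 u hu
  have hψ0 : ψ 0 = 1 := by rw [hψdef]; simp only; rw [hF0, hH0]; norm_num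
  rw [hψ0] at hval
  have hHne : Hf α β u ≠ 0 := (H_pos α β hα hβ hu.1 hu.2).ne'
  have : Ff α β u / Hf α β u = 1 := hval
  field_simp at this
  exact this

lemma K_ge (α β : ℝ) (hα : 0 < α) (hβ : 0 < β) {u : ℝ} (hu0 : 0 < u) (hu1 : u < 1) :
    α*β ≤ α*β*(1-u)*Gf α β u + (α+β)*(1+α+β)*u*Gf α β u
      - (α+β)*u*(1-u)*Gf1 α β u := by
  set g : ℕ → ℝ := coefR (1+α) (1+β) with hg
  obtain ⟨hsg, esg⟩ := tsum_mul_shift (c := g)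
    (d := fun n => Nat.casesOn n (0:ℝ) (fun m => g m)) rfl (fun n => rfl)
    (sum_S0 (1+α) (1+β) hu0 hu1)
  obtain ⟨hN, eN⟩ := tsum_mul_shift (c := c1 (1+α) (1+β))
    (d := fun n => (n:ℝ) * g n) (by simp) (fun n => by simp only [c1, hg]; push_cast; ring)
    (sum_S1 (1+α) (1+β) hu0 hu1)
  obtain ⟨hN2, eN2⟩ := tsum_mul_shift (c := fun n => (n:ℝ) * g n)
    (d := fun n => Nat.casesOn n (0:ℝ) (fun m => (m:ℝ) * g m)) rfl (fun n => rfl) hN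
  set Cc : ℝ := (α+β)*(1+α+β) - α*β with hCc
  have hS0 := sum_S0 (1+α) (1+β) hu0 hu1
  -- combine into one tsum
  have comb : α*β*(1-u)*Gf α β u + (α+β)*(1+α+β)*u*Gf α β u - (α+β)*u*(1-u)*Gf1 α β u
      = ∑' n : ℕ, (α*β*(g n * u^n)
        + Cc*((fun n => Nat.casesOn n (0:ℝ) (fun m => g m)) n * u^n)
        - (α+β)*(((n:ℝ) * g n) * u^n)
        + (α+β)*((fun n => Nat.casesOn n (0:ℝ) (fun m => (m:ℝ) * g m)) n * u^n)) := by
    rw [Summable.tsum_add (((hS0.mul_left _).add (hsg.mul_left _)).sub (hN.mul_left _))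
      (hN2.mul_left _),
      Summable.tsum_sub ((hS0.mul_left _).add (hsg.mul_left _)) (hN.mul_left _),
      Summable.tsum_add (hS0.mul_left _) (hsg.mul_left _),
      tsum_mul_left, tsum_mul_left, tsum_mul_left, tsum_mul_left]
    have hGf : Gf α β u = ∑' n : ℕ, g n * u^n := rfl
    have hGf1 : Gf1 α β u = ∑' n : ℕ, c1 (1+α) (1+β) n * u^n := rfl
    rw [hGf, hGf1, ← esg, ← eN, ← eN2, ← eN]
    ring
  rw [comb]
  have hnonneg : ∀ n : ℕ, 0 ≤ (α*β*(g n * u^n)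
        + Cc*((fun n => Nat.casesOn n (0:ℝ) (fun m => g m)) n * u^n)
        - (α+β)*(((n:ℝ) * g n) * u^n)
        + (α+β)*((fun n => Nat.casesOn n (0:ℝ) (fun m => (m:ℝ) * g m)) n * u^n)) := by
    intro n
    cases n with
    | zero =>
      simp only [Nat.casesOn]
      have : g 0 = 1 := coefR_zero _ _
      rw [this]
      simp
      positivity
    | succ m =>
      simp only
      have hrec := coefR_rec (1+α) (1+β) m
      rw [← hg] at hrec
      have hgm : 0 < g m := coefG_pos α β hα hβ m
      have hcoef : (α*β - (α+β)*((m:ℝ)+1)) * g (m+1) + (Cc + (α+β)*(m:ℝ)) * g m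
          = α^2*β^2 * g m / ((m:ℝ)+1)^2 := by
        have hm2 : ((m:ℝ)+1)^2 ≠ 0 := by positivity
        rw [eq_div_iff hm2, hCc]
        linear_combination (α*β - (α+β)*((m:ℝ)+1)) * hrec
      have hterm : (α*β*(g (m+1) * u^(m+1)) + Cc*(g m * u^(m+1))
          - (α+β)*((((m:ℕ)+1:ℕ):ℝ) * g (m+1) * u^(m+1))
          + (α+β)*((m:ℝ) * g m * u^(m+1)))
          = ((α*β - (α+β)*((m:ℝ)+1)) * g (m+1) + (Cc + (α+β)*(m:ℝ)) * g m) * u^(m+1) := by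
        push_cast
        ring
      have hpow : (0:ℝ) ≤ u^(m+1) := by positivity
      calc (0:ℝ) ≤ (α^2*β^2 * g m / ((m:ℝ)+1)^2) * u^(m+1) := by positivity
      _ = ((α*β - (α+β)*((m:ℝ)+1)) * g (m+1) + (Cc + (α+β)*(m:ℝ)) * g m) * u^(m+1) := by
          rw [hcoef]
      _ = _ := by push_cast; ring
  have hsummable : Summable (fun n : ℕ => α*β*(g n * u^n)
        + Cc*((fun n => Nat.casesOn n (0:ℝ) (fun m => g m)) n * u^n)
        - (α+β)*(((n:ℝ) * g n) * u^n)
        + (α+β)*((fun n => Nat.casesOn n (0:ℝ) (fun m => (m:ℝ) * g m)) n * u^n)) :=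
    (((hS0.mul_left _).add (hsg.mul_left _)).sub (hN.mul_left _)).add (hN2.mul_left _)
  have h0term : (α*β*(g 0 * u^0)
        + Cc*((fun n => Nat.casesOn n (0:ℝ) (fun m => g m)) 0 * u^0)
        - (α+β)*(((0:ℕ):ℝ) * g 0 * u^0)
        + (α+β)*((fun n => Nat.casesOn n (0:ℝ) (fun m => (m:ℝ) * g m)) 0 * u^0)) = α*β := by
    simp [coefR_zero, hg]
  calc α*β = _ := h0term.symm
  _ ≤ _ := Summable.le_tsum hsummable 0 (fun i _ => hnonneg i)

theorem stmt15 (α β : ℝ) (hα : 0 < α) (hβ : 0 < β) (u : ℝ)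
    (hu : u ∈ Set.Ioo (0 : ℝ) 1) :
    u * deriv (fun x => hypFR (-α) (-β) 1 x) u / hypFR (-α) (-β) 1 u <
      α * β / (α + β) := by
  have hu0 : 0 < u := hu.1
  have hu1 : u < 1 := hu.2
  have hua : |u| < 1 := abs_lt.mpr ⟨by linarith, hu1⟩
  have hFH := F_eq_H α β hα hβ
  have hfun : (fun x => hypFR (-α) (-β) 1 x) = Ff α β := rfl
  have hfun2 : hypFR (-α) (-β) 1 u = Ff α β u := rfl
  rw [hfun, hfun2]
  have hev : Ff α β =ᶠ[𝓝 u] Hf α β := by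
    filter_upwards [Ioo_mem_nhds hu0 hu1] with x hx
    exact hFH x hx
  have hder : deriv (Ff α β) u = Hf1 α β u := by
    rw [hev.deriv_eq, (hasDerivAt_H α β hua).deriv]
  have hval : Ff α β u = Hf α β u := hFH u ⟨hu0, hu1⟩
  rw [hder, hval]
  have hH := H_pos α β hα hβ hu0 hu1
  have hab : (0:ℝ) < α + β := by linarith
  rw [div_lt_div_iff₀ hH hab]
  have hK := K_ge α β hα hβ hu0 hu1
  have hvs1 : (0:ℝ) < (1-u) ^ (α+β : ℝ) := Real.rpow_pos_of_pos (by linarith) _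
  have e : (1-u) ^ (1+α+β : ℝ) = (1-u) ^ (α+β : ℝ) * (1-u) := by
    rw [← Real.rpow_add_one (by intro h; linarith [h] : (1:ℝ)-u ≠ 0)]
    congr 1
    ring
  have e2 : α*β*Hf α β u - u * Hf1 α β u * (α+β)
      = (1-u)^(α+β:ℝ) * (α*β*(1-u)*Gf α β u + (α+β)*(1+α+β)*u*Gf α β u
        - (α+β)*u*(1-u)*Gf1 α β u) := by
    simp only [Hf, Hf1]
    rw [e]
    ring
  have hKpos : (0:ℝ) < α*β*(1-u)*Gf α β u + (α+β)*(1+α+β)*u*Gf α β u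
      - (α+β)*u*(1-u)*Gf1 α β u := lt_of_lt_of_le (by positivity) hK
  nlinarith [mul_pos hvs1 hKpos]
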